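/- arXiv:2206.04978 — 3 statements merged into one kernel-verified Lean document; each statement's English description precedes it below -/
import Mathlib

section
/- Let g(λ) := h(|λ|) and gₙ(λ) := hₙ(|λ|) where h(x) := max{min{|x|,1}, |x|−1}, h₁(x) := x²/4, and hₙ := h + (1/n)(h₁ − h). Then gₙ → g pointwise on ℂ, while the sublevel sets satisfy sub₁(gₙ) = 2𝔻 for every n and sub₁(g) = 𝔻, so sub₁(gₙ) does not converge to sub₁(g) in Hausdorff distance. -/
/-!
`hEx3` is constant equal to `1` on `[1, 2]`, so the strict sublevel set at level `1` jumps from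
radius `2` to radius `1` in the limit. For every `n ≥ 1` the sublevel set of `gnEx3 n` is the
fixed ball `ball 0 2`, whose closure differs from that of `ball 0 1`; hence the Hausdorff distances
form an eventually constant, nonzero sequence.
-/

open Filter Topology Metric

noncomputable def hEx3 (x : ℝ) : ℝ := max (min |x| 1) (|x| - 1)
noncomputable def h1Ex3 (x : ℝ) : ℝ := x ^ 2 / 4
noncomputable def hnEx3 (n : ℕ) (x : ℝ) : ℝ := hEx3 x + (1 / n : ℝ) * (h1Ex3 x - hEx3 x)
noncomputable def gEx3 (z : ℂ) : ℝ := hEx3 ‖z‖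
noncomputable def gnEx3 (n : ℕ) (z : ℂ) : ℝ := hnEx3 n ‖z‖

lemma hEx3_of_nonneg {x : ℝ} (hx : 0 ≤ x) : hEx3 x = max (min x 1) (x - 1) := by
  rw [hEx3, abs_of_nonneg hx]

lemma hEx3_lt_one_iff {x : ℝ} (hx : 0 ≤ x) : hEx3 x < 1 ↔ x < 1 := by
  rw [hEx3_of_nonneg hx]
  constructor
  · intro h
    by_contra! hx1
    linarith [le_max_left (min x 1) (x - 1), min_eq_right hx1]
  · intro h
    exact max_lt (min_lt_of_left_lt h) (by linarith)

lemma hEx3_le_one_iff {x : ℝ} (hx : 0 ≤ x) : hEx3 x ≤ 1 ↔ x ≤ 2 := by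
  rw [hEx3_of_nonneg hx, max_le_iff]
  exact ⟨fun h => by linarith [h.2], fun h => ⟨min_le_right x 1, by linarith⟩⟩

/- `hnEx3 n = (1 - 1/n) hEx3 + (1/n) h1Ex3`: on `[0, 2)` both terms are `≤ 1` and `h1Ex3 < 1`,
on `[2, ∞)` both are `≥ 1`. -/
lemma hnEx3_lt_one_iff {n : ℕ} (hn : 1 ≤ n) {x : ℝ} (hx : 0 ≤ x) : hnEx3 n x < 1 ↔ x < 2 := by
  have ht : (0 : ℝ) < 1 / n := by positivity
  have ht1 : (1 : ℝ) / n ≤ 1 := by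
    rw [div_le_one (by positivity)]
    exact_mod_cast hn
  rw [hnEx3, h1Ex3]
  constructor
  · intro h
    by_contra! hx2
    have hh : 1 ≤ hEx3 x := not_lt.1 fun hlt => by linarith [(hEx3_lt_one_iff hx).1 hlt]
    have hh1 : (1 : ℝ) ≤ x ^ 2 / 4 := by nlinarith
    nlinarith
  · intro h
    have hh : hEx3 x ≤ 1 := (hEx3_le_one_iff hx).2 h.le
    have hh1 : x ^ 2 / 4 < 1 := by nlinarith
    nlinarith

lemma setOf_lt_comp_norm_eq_ball {E : Type*} [SeminormedAddCommGroup E] {f : ℝ → ℝ} {c R : ℝ}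
    (hf : ∀ x, 0 ≤ x → (f x < c ↔ x < R)) : {z : E | f ‖z‖ < c} = ball 0 R := by
  ext z
  rw [Set.mem_ofPred_eq, mem_ball_zero_iff]
  exact hf _ (norm_nonneg z)

lemma hausdorffDist_ball_ball_ne_zero {E : Type*} [NormedAddCommGroup E] [NormedSpace ℝ E]
    [Nontrivial E] (x : E) {r R : ℝ} (hr : 0 < r) (hrR : r < R) :
    hausdorffDist (ball x R) (ball x r) ≠ 0 := by
  have hfin : hausdorffEDist (ball x R) (ball x r) ≠ ⊤ :=
    hausdorffEDist_ne_top_of_nonempty_of_bounded (nonempty_ball.2 (hr.trans hrR))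
      (nonempty_ball.2 hr) isBounded_ball isBounded_ball
  rw [Ne, hausdorffDist_zero_iff_closure_eq_closure hfin, closure_ball x (hr.trans hrR).ne',
    closure_ball x hr.ne']
  intro hballs
  obtain ⟨v, hv⟩ := exists_norm_eq E (hr.trans hrR).le
  have hmem : x + v ∈ closedBall x R := by simp [hv]
  rw [hballs] at hmem
  simp only [mem_closedBall, dist_self_add_left, hv] at hmem
  linarith

/-- The "locally constant" example: `gₙ → g` pointwise, but the sublevel sets
`sub₁(gₙ) = 2𝔻` do not Hausdorff-converge to `sub₁(g) = 𝔻`. -/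
theorem locally_constant_example :
    (∀ z : ℂ, Tendsto (fun n => gnEx3 n z) atTop (𝓝 (gEx3 z))) ∧
    (∀ n : ℕ, 1 ≤ n → {z : ℂ | gnEx3 n z < 1} = ball (0 : ℂ) 2) ∧
    {z : ℂ | gEx3 z < 1} = ball (0 : ℂ) 1 ∧
    ¬ Tendsto (fun n => hausdorffDist {z : ℂ | gnEx3 n z < 1} {z : ℂ | gEx3 z < 1})
        atTop (𝓝 0) := by
  have hsub_n : ∀ n : ℕ, 1 ≤ n → {z : ℂ | gnEx3 n z < 1} = ball (0 : ℂ) 2 := fun n hn =>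
    setOf_lt_comp_norm_eq_ball fun _ hx => hnEx3_lt_one_iff hn hx
  have hsub : {z : ℂ | gEx3 z < 1} = ball (0 : ℂ) 1 :=
    setOf_lt_comp_norm_eq_ball fun _ hx => hEx3_lt_one_iff hx
  refine ⟨fun z => ?_, hsub_n, hsub, fun hlim => ?_⟩
  · have hcorr := tendsto_one_div_atTop_nhds_zero_nat.mul_const (h1Ex3 ‖z‖ - hEx3 ‖z‖)
    simpa [gnEx3, hnEx3, gEx3] using tendsto_const_nhds.add hcorr
  · have hconst : (fun n => hausdorffDist {z : ℂ | gnEx3 n z < 1} {z : ℂ | gEx3 z < 1})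
        =ᶠ[atTop] fun _ => hausdorffDist (ball (0 : ℂ) 2) (ball 0 1) := by
      filter_upwards [eventually_ge_atTop 1] with n hn
      rw [hsub_n n hn, hsub]
    exact hausdorffDist_ball_ball_ne_zero (0 : ℂ) one_pos one_lt_two
      (tendsto_const_nhds_iff.1 (hlim.congr' hconst))
end

section
/- Let hₙ : [0,∞) → [0,∞) be hₙ(x) = |sin(nπx)| for x ∈ [0,1] and hₙ(x) = x − 1 for x > 1, and gₙ(λ) := hₙ(|λ|). Then for every ε > 0 the sublevel sets sub_ε(gₙ) := {λ ∈ ℂ : gₙ(λ) < ε} converge in Hausdorff distance to the open disk (1+ε)𝔻, while the sequence of functions gₙ does not converge pointwise on ℂ (e.g. it fails to converge at points λ with irrational |λ| in (0,1)). -/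
/-!
Sublevel sets: `gₙ λ ≥ |λ| - 1`, so `sub_ε(gₙ) ⊆ (1+ε)𝔻`; conversely `gₙ` vanishes on the circles
of radius `k/n`, `k ≤ n`, which are `1/n`-dense in the closed unit disk, so every point of
`(1+ε)𝔻` lies within `1/n` of `sub_ε(gₙ)`.

Non-convergence: for `|λ| < 1`, `gₙ λ = |sin (nθ)|` with `θ = π|λ| ∈ (0, π)`. If this converged,
so would `cos (2nθ) = 1 - 2 sin² (nθ)`, to some `c`. The recurrence
`cos ((n+2)φ) + cos (nφ) = 2 cos ((n+1)φ) cos φ` forces `c = 0` since `cos φ ≠ 1`, while the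
doubling formula forces `c = 2c² - 1`.
-/

open Filter Topology Metric Real

noncomputable def hnEx5 (n : ℕ) (x : ℝ) : ℝ :=
  if x ≤ 1 then |Real.sin (n * π * x)| else x - 1

noncomputable def gnEx5 (n : ℕ) (z : ℂ) : ℝ := hnEx5 n ‖z‖

theorem not_tendsto_cos_nat_mul {φ : ℝ} (hφ : cos φ ≠ 1) (c : ℝ) :
    ¬ Tendsto (fun n : ℕ => cos (n * φ)) atTop (𝓝 c) := by
  intro hc
  have hrec : ∀ n : ℕ,
      cos ((n + 2 : ℕ) * φ) + cos (n * φ) = 2 * cos ((n + 1 : ℕ) * φ) * cos φ := by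
    intro n
    rw [cos_add_cos]
    push_cast
    ring_nf
  have hc_zero : c = 0 := by
    have h : c + c = 2 * c * cos φ := tendsto_nhds_unique
      (((tendsto_add_atTop_iff_nat 2).2 hc).add hc)
      (by simp_rw [hrec]; exact (((tendsto_add_atTop_iff_nat 1).2 hc).const_mul 2).mul_const _)
    have : c * (1 - cos φ) = 0 := by linarith
    exact (mul_eq_zero.1 this).resolve_right (sub_ne_zero.2 hφ.symm)
  have hdouble : ∀ n : ℕ, cos ((2 * n : ℕ) * φ) = 2 * cos (n * φ) ^ 2 - 1 := by
    intro n
    rw [← cos_two_mul]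
    push_cast
    ring_nf
  have h : c = 2 * c ^ 2 - 1 := tendsto_nhds_unique
    (hc.comp (tendsto_id.const_mul_atTop' two_pos))
    (by simp_rw [Function.comp_def, hdouble]; exact ((hc.pow 2).const_mul 2).sub_const 1)
  norm_num [hc_zero] at h

theorem not_tendsto_abs_sin_nat_mul {θ : ℝ} (hθ : sin θ ≠ 0) (L : ℝ) :
    ¬ Tendsto (fun n : ℕ => |sin (n * θ)|) atTop (𝓝 L) := by
  intro hL
  refine not_tendsto_cos_nat_mul (φ := 2 * θ) ?_ (1 - 2 * L ^ 2) ?_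
  · rw [cos_two_mul, cos_sq']
    intro h
    exact hθ (pow_eq_zero_iff two_ne_zero |>.1 (by linarith))
  · have h : ∀ n : ℕ, cos (n * (2 * θ)) = 1 - 2 * |sin (n * θ)| ^ 2 := by
      intro n
      rw [mul_left_comm, cos_two_mul, cos_sq', sq_abs]
      ring
    simp_rw [h]
    exact ((hL.pow 2).const_mul 2).const_sub 1

theorem sub_one_le_hnEx5 (n : ℕ) (x : ℝ) : x - 1 ≤ hnEx5 n x := by
  unfold hnEx5
  split_ifs with h
  · linarith [abs_nonneg (sin (n * π * x))]
  · rfl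

theorem hnEx5_natCast_div_eq_zero {n k : ℕ} (hk : k ≤ n) : hnEx5 n (k / n) = 0 := by
  rcases n.eq_zero_or_pos with rfl | hn
  · simp [hnEx5]
  have hk1 : (k : ℝ) / n ≤ 1 := div_le_one_of_le₀ (by exact_mod_cast hk) n.cast_nonneg
  rw [hnEx5, if_pos hk1, mul_right_comm, mul_div_cancel₀ _ (by positivity), sin_nat_mul_pi,
    abs_zero]

theorem exists_hnEx5_eq_zero_near {n : ℕ} (hn : 0 < n) {r : ℝ} (hr0 : 0 ≤ r) (hr1 : r ≤ 1) :
    ∃ t, 0 ≤ t ∧ hnEx5 n t = 0 ∧ |t - r| ≤ 1 / n := by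
  have hn' : (0 : ℝ) < n := by exact_mod_cast hn
  set k := ⌊n * r⌋₊
  have hk_le : (k : ℝ) ≤ n * r := Nat.floor_le (by positivity)
  have hk_gt : n * r < k + 1 := Nat.lt_floor_add_one _
  refine ⟨k / n, by positivity, hnEx5_natCast_div_eq_zero (Nat.floor_le_of_le (by nlinarith)), ?_⟩
  rw [abs_sub_comm, abs_of_nonneg, sub_le_iff_le_add, ← add_div]
  · rw [le_div_iff₀ hn']; linarith
  · rw [sub_nonneg, div_le_iff₀ hn']; linarith

theorem exists_norm_eq_dist_eq {E : Type*} [NormedAddCommGroup E] [NormedSpace ℝ E] [Nontrivial E]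
    (y : E) {t : ℝ} (ht : 0 ≤ t) : ∃ w : E, ‖w‖ = t ∧ dist w y = |t - ‖y‖| := by
  rcases eq_or_ne y 0 with rfl | hy
  · obtain ⟨w, hw⟩ := exists_norm_eq E ht
    exact ⟨w, hw, by simp [hw, abs_of_nonneg ht]⟩
  have hy' : 0 < ‖y‖ := norm_pos_iff.2 hy
  refine ⟨(t / ‖y‖) • y, ?_, ?_⟩
  · rw [norm_smul, norm_div, norm_norm, Real.norm_of_nonneg ht, div_mul_cancel₀ _ hy'.ne']
  · have h : t - ‖y‖ = (t / ‖y‖ - 1) * ‖y‖ := by field_simp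
    rw [dist_eq_norm, h, abs_mul, abs_norm, ← Real.norm_eq_abs, ← norm_smul, sub_smul, one_smul]

theorem hausdorffDist_sublevel_gnEx5_ball_le {n : ℕ} (hn : 0 < n) {ε : ℝ} (hε : 0 < ε) :
    hausdorffDist {z : ℂ | gnEx5 n z < ε} (ball (0 : ℂ) (1 + ε)) ≤ 1 / n := by
  apply hausdorffDist_le_of_mem_dist (by positivity)
  · intro z hz
    have hz' : hnEx5 n ‖z‖ < ε := hz
    refine ⟨z, ?_, by simp⟩
    rw [mem_ball_zero_iff]
    linarith [sub_one_le_hnEx5 n ‖z‖]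
  · intro y hy
    by_cases hy1 : 1 < ‖y‖
    · refine ⟨y, ?_, by simp⟩
      have : ‖y‖ < 1 + ε := mem_ball_zero_iff.1 hy
      show hnEx5 n ‖y‖ < ε
      rw [hnEx5, if_neg hy1.not_ge]
      linarith
    obtain ⟨t, ht0, ht, hty⟩ := exists_hnEx5_eq_zero_near hn (norm_nonneg y) (not_lt.1 hy1)
    obtain ⟨w, hw, hwy⟩ := exists_norm_eq_dist_eq y ht0
    refine ⟨w, ?_, ?_⟩
    · show hnEx5 n ‖w‖ < ε
      rwa [hw, ht]
    · rw [dist_comm, hwy]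
      exact hty

theorem gnEx5_eq_abs_sin_of_norm_le_one (n : ℕ) {z : ℂ} (hz : ‖z‖ ≤ 1) :
    gnEx5 n z = |sin (n * (π * ‖z‖))| := by
  rw [gnEx5, hnEx5, if_pos hz, mul_assoc]

/-- The "increasingly oscillating" example: for every `ε > 0` the sublevel sets
`sub_ε(gₙ)` Hausdorff-converge to the open disk `(1+ε)𝔻`, yet `gₙ` does not
converge pointwise (it fails at every point with irrational modulus in `(0,1)`). -/
theorem oscillating_example :
    (∀ ε : ℝ, 0 < ε →
      Tendsto (fun n => hausdorffDist {z : ℂ | gnEx5 n z < ε} (ball (0 : ℂ) (1 + ε)))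
        atTop (𝓝 0)) ∧
    (∀ z : ℂ, 0 < ‖z‖ → ‖z‖ < 1 → Irrational ‖z‖ →
      ¬ ∃ L : ℝ, Tendsto (fun n => gnEx5 n z) atTop (𝓝 L)) := by
  refine ⟨fun ε hε => ?_, fun z hz0 hz1 _ ⟨L, hL⟩ => ?_⟩
  · refine squeeze_zero' (Eventually.of_forall fun n => hausdorffDist_nonneg) ?_
      tendsto_one_div_atTop_nhds_zero_nat
    filter_upwards [eventually_gt_atTop 0] with n hn
    exact hausdorffDist_sublevel_gnEx5_ball_le hn hε
  · have hsin : sin (π * ‖z‖) ≠ 0 :=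
      (sin_pos_of_pos_of_lt_pi (by positivity) (by nlinarith [pi_pos])).ne'
    simp_rw [gnEx5_eq_abs_sin_of_norm_le_one _ hz1.le] at hL
    exact not_tendsto_abs_sin_nat_mul hsin L hL
end

section
/- Let A and Aₙ (n ∈ ℕ) be bounded linear operators on a Banach space X. If for every ε > 0 the pseudospectra spec_ε(Aₙ) := {λ : μ(Aₙ − λI) < ε} converge in Hausdorff distance to spec_ε(A), then the functions fₙ(λ) := μ(Aₙ − λI) converge pointwise on ℂ to f(λ) := μ(A − λI). -/
open ContinuousLinearMap

/-- The lower norm of a bounded linear operator: `ν(A) = inf {‖Ax‖ : ‖x‖ = 1}`. -/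
noncomputable def lowerNorm {E F : Type*} [NormedAddCommGroup E] [NormedSpace ℂ E]
    [NormedAddCommGroup F] [NormedSpace ℂ F] (A : E →L[ℂ] F) : ℝ :=
  sInf ((fun x => ‖A x‖) '' {x : E | ‖x‖ = 1})

/-- The Banach-space adjoint of `A`, acting on the dual space by `φ ↦ φ ∘ A`. -/
noncomputable def banachAdjoint {X : Type*} [NormedAddCommGroup X] [NormedSpace ℂ X]
    (A : X →L[ℂ] X) : StrongDual ℂ X →L[ℂ] StrongDual ℂ X :=
  (ContinuousLinearMap.compL ℂ X X ℂ).flip A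

/-- `μ(A) = min {ν(A), ν(A*)}`. -/
noncomputable def mu {X : Type*} [NormedAddCommGroup X] [NormedSpace ℂ X]
    (A : X →L[ℂ] X) : ℝ :=
  min (lowerNorm A) (lowerNorm (banachAdjoint A))

/-!
Since `μ` is 1-Lipschitz for the operator norm, `f` and `fₙ` are 1-Lipschitz on `ℂ`, and the
pseudospectra are their strict sublevel sets. If `f(λ) < t`, a point of `{fₙ < t}` close to `λ`
(Hausdorff convergence) gives `fₙ(λ) < t + o(1)`, and symmetrically. Hausdorff convergence carries
information only because the pseudospectra are nonempty and bounded: they contain the spectrum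
(`μ(B - λ) > 0` forces `B - λ` to be invertible) and `μ(B - λ) ≥ |λ| - ‖B‖`.
-/

open Filter Topology Metric

section LowerNorm

variable {E F : Type*} [NormedAddCommGroup E] [NormedSpace ℂ E]
  [NormedAddCommGroup F] [NormedSpace ℂ F]

lemma lowerNorm_nonneg (B : E →L[ℂ] F) : 0 ≤ lowerNorm B :=
  Real.sInf_nonneg fun _ ⟨_, _, hx⟩ => hx ▸ norm_nonneg _

lemma lowerNorm_le_norm_apply (B : E →L[ℂ] F) {x : E} (hx : ‖x‖ = 1) : lowerNorm B ≤ ‖B x‖ :=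
  csInf_le ⟨0, fun _ ⟨_, _, hy⟩ => hy ▸ norm_nonneg _⟩ ⟨x, hx, rfl⟩

lemma le_lowerNorm [Nontrivial E] (B : E →L[ℂ] F) {c : ℝ}
    (h : ∀ x : E, ‖x‖ = 1 → c ≤ ‖B x‖) : c ≤ lowerNorm B := by
  obtain ⟨x, hx⟩ := exists_norm_eq E zero_le_one
  exact le_csInf ⟨_, x, hx, rfl⟩ fun _ ⟨y, hy, hyB⟩ => hyB ▸ h y hy

lemma lowerNorm_mul_norm_le (B : E →L[ℂ] F) (x : E) : lowerNorm B * ‖x‖ ≤ ‖B x‖ := by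
  rcases eq_or_ne x 0 with rfl | hx
  · simp
  have hx' : ‖x‖ ≠ 0 := norm_ne_zero_iff.mpr hx
  have hunit : ‖(‖x‖⁻¹ : ℂ) • x‖ = 1 := by simp [norm_smul, hx']
  have := lowerNorm_le_norm_apply B hunit
  rwa [map_smul, norm_smul, norm_inv, Complex.norm_real, norm_norm,
    le_inv_mul_iff₀ (norm_pos_iff.mpr hx), mul_comm] at this

lemma lowerNorm_le_add_norm_sub (B C : E →L[ℂ] F) : lowerNorm B ≤ lowerNorm C + ‖B - C‖ := by
  rcases subsingleton_or_nontrivial E with hE | hE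
  · simp [Subsingleton.elim B C]
  rw [← sub_le_iff_le_add]
  refine le_lowerNorm C fun x hx => ?_
  calc lowerNorm B - ‖B - C‖ ≤ ‖B x‖ - ‖(B - C) x‖ := by
        gcongr
        · exact lowerNorm_le_norm_apply B hx
        · simpa [hx] using (B - C).le_opNorm x
    _ ≤ ‖C x‖ := sub_le_comm.mp (norm_sub_norm_le (B x) (C x))

lemma antilipschitz_of_lowerNorm_pos {B : E →L[ℂ] F} (h : 0 < lowerNorm B) :
    AntilipschitzWith (lowerNorm B).toNNReal⁻¹ B :=
  B.antilipschitz_of_bound fun x => by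
    rw [NNReal.coe_inv, Real.coe_toNNReal _ h.le, ← div_eq_inv_mul, le_div_iff₀ h, mul_comm]
    exact lowerNorm_mul_norm_le B x

lemma sub_norm_le_lowerNorm_sub_smul_one [Nontrivial E] (T : E →L[ℂ] E) (c : ℂ) :
    ‖c‖ - ‖T‖ ≤ lowerNorm (T - c • 1) := by
  refine le_lowerNorm _ fun x hx => ?_
  calc ‖c‖ - ‖T‖ ≤ ‖c • x‖ - ‖T x‖ := by
        gcongr
        · simp [norm_smul, hx]
        · simpa [hx] using T.le_opNorm x
    _ ≤ ‖(T - c • 1) x‖ := by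
        rw [sub_apply, norm_sub_rev]
        exact norm_sub_norm_le _ _

end LowerNorm

section Adjoint

variable {X : Type*} [NormedAddCommGroup X] [NormedSpace ℂ X]

lemma banachAdjoint_apply (B : X →L[ℂ] X) (φ : StrongDual ℂ X) :
    banachAdjoint B φ = φ.comp B := rfl

lemma banachAdjoint_sub (B C : X →L[ℂ] X) :
    banachAdjoint (B - C) = banachAdjoint B - banachAdjoint C :=
  map_sub ((compL ℂ X X ℂ).flip) B C

lemma norm_banachAdjoint_le (B : X →L[ℂ] X) : ‖banachAdjoint B‖ ≤ ‖B‖ :=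
  opNorm_le_bound _ (norm_nonneg B) fun φ => by
    rw [banachAdjoint_apply, mul_comm]
    exact opNorm_comp_le φ B

lemma banachAdjoint_smul_one (c : ℂ) : banachAdjoint (c • (1 : X →L[ℂ] X)) = c • 1 := by
  rw [banachAdjoint, map_smul]
  rfl

lemma range_topologicalClosure_eq_top_of_injective_banachAdjoint {B : X →L[ℂ] X}
    (h : Function.Injective (banachAdjoint B)) :
    (LinearMap.range (B : X →ₗ[ℂ] X)).topologicalClosure = ⊤ := by
  set p := (LinearMap.range (B : X →ₗ[ℂ] X)).topologicalClosure
  by_contra hp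
  obtain ⟨x, hx⟩ : ∃ x, x ∉ p := by
    by_contra! hall
    exact hp (Submodule.eq_top_iff'.mpr hall)
  -- makes `X ⧸ p` a normed space, so that its dual separates points
  have : IsClosed (p : Set X) := Submodule.isClosed_topologicalClosure _
  obtain ⟨g, hg⟩ := SeparatingDual.exists_ne_zero (R := ℂ)
    ((Submodule.Quotient.mk_eq_zero p).not.mpr hx)
  have hker : banachAdjoint B (g.comp p.mkQL) = banachAdjoint B 0 := by
    ext y
    have hy : B y ∈ p := (LinearMap.range (B : X →ₗ[ℂ] X)).le_topologicalClosure ⟨y, rfl⟩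
    simp [banachAdjoint_apply, (Submodule.Quotient.mk_eq_zero p).mpr hy]
  exact hg (by simpa using congr($(h hker) x))

end Adjoint

section Mu

variable {X : Type*} [NormedAddCommGroup X] [NormedSpace ℂ X]

lemma mu_nonneg (B : X →L[ℂ] X) : 0 ≤ mu B :=
  le_min (lowerNorm_nonneg _) (lowerNorm_nonneg _)

lemma mu_le_add_norm_sub (B C : X →L[ℂ] X) : mu B ≤ mu C + ‖B - C‖ := by
  have hadj : ‖banachAdjoint B - banachAdjoint C‖ ≤ ‖B - C‖ :=
    banachAdjoint_sub B C ▸ norm_banachAdjoint_le _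
  rw [mu, mu, ← min_add_add_right]
  exact min_le_min (lowerNorm_le_add_norm_sub B C)
    ((lowerNorm_le_add_norm_sub _ _).trans (by gcongr))

lemma lipschitzWith_mu_sub_smul_one (B : X →L[ℂ] X) :
    LipschitzWith 1 fun z : ℂ => mu (B - z • 1) :=
  LipschitzWith.of_le_add fun z w => by
    have hdiff : (B - z • 1) - (B - w • 1) = (w - z) • (1 : X →L[ℂ] X) := by
      rw [sub_smul]; abel
    calc mu (B - z • 1) ≤ mu (B - w • 1) + ‖(w - z) • (1 : X →L[ℂ] X)‖ :=
          hdiff ▸ mu_le_add_norm_sub _ _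
      _ ≤ mu (B - w • 1) + dist z w := by
          gcongr
          rw [dist_comm, dist_eq_norm]
          exact (norm_smul_le _ _).trans (mul_le_of_le_one_right (norm_nonneg _)
            (norm_id_le : ‖(1 : X →L[ℂ] X)‖ ≤ 1))

lemma sub_norm_le_mu_sub_smul_one [Nontrivial X] (B : X →L[ℂ] X) (c : ℂ) :
    ‖c‖ - ‖B‖ ≤ mu (B - c • 1) := by
  refine le_min (sub_norm_le_lowerNorm_sub_smul_one B c) ?_
  rw [banachAdjoint_sub, banachAdjoint_smul_one]
  exact (sub_le_sub_left (norm_banachAdjoint_le B) _).trans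
    (sub_norm_le_lowerNorm_sub_smul_one _ c)

lemma isUnit_of_mu_pos [CompleteSpace X] {B : X →L[ℂ] X} (h : 0 < mu B) : IsUnit B := by
  rw [isUnit_iff_bijective, bijective_iff_dense_range_and_antilipschitz]
  exact ⟨range_topologicalClosure_eq_top_of_injective_banachAdjoint
      (antilipschitz_of_lowerNorm_pos (h.trans_le (min_le_right _ _))).injective,
    _, antilipschitz_of_lowerNorm_pos (h.trans_le (min_le_left _ _))⟩

end Mu

section Pseudospectrum

variable {X : Type*} [NormedAddCommGroup X] [NormedSpace ℂ X]

def pseudospectrum (B : X →L[ℂ] X) (ε : ℝ) : Set ℂ :=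
  {z | mu (B - z • (1 : X →L[ℂ] X)) < ε}

lemma spectrum_subset_pseudospectrum [CompleteSpace X] (B : X →L[ℂ] X) {ε : ℝ} (hε : 0 < ε) :
    spectrum ℂ B ⊆ pseudospectrum B ε := by
  intro z hz
  by_contra! hεz
  have hunit : IsUnit (B - z • 1) := isUnit_of_mu_pos (hε.trans_le (not_lt.mp hεz))
  refine spectrum.mem_iff.mp hz ?_
  rw [Algebra.algebraMap_eq_smul_one, ← neg_sub]
  exact hunit.neg

lemma pseudospectrum_nonempty [CompleteSpace X] [Nontrivial X] (B : X →L[ℂ] X) {ε : ℝ}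
    (hε : 0 < ε) : (pseudospectrum B ε).Nonempty :=
  (spectrum.nonempty B).mono (spectrum_subset_pseudospectrum B hε)

lemma isBounded_pseudospectrum [Nontrivial X] (B : X →L[ℂ] X) (ε : ℝ) :
    Bornology.IsBounded (pseudospectrum B ε) :=
  (isBounded_closedBall (x := 0) (r := ‖B‖ + ε)).subset fun z (hz : mu _ < ε) => by
    have := sub_norm_le_mu_sub_smul_one B z
    rw [mem_closedBall, dist_zero_right]
    linarith

lemma hausdorffEDist_pseudospectrum_ne_top [CompleteSpace X] [Nontrivial X]
    (B C : X →L[ℂ] X) {ε : ℝ} (hε : 0 < ε) :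
    hausdorffEDist (pseudospectrum B ε) (pseudospectrum C ε) ≠ ⊤ :=
  hausdorffEDist_ne_top_of_nonempty_of_bounded (pseudospectrum_nonempty B hε)
    (pseudospectrum_nonempty C hε) (isBounded_pseudospectrum B ε) (isBounded_pseudospectrum C ε)

end Pseudospectrum

section Sublevel

variable {α : Type*} [PseudoMetricSpace α]

lemma lt_add_of_hausdorffDist_sublevel_lt {f g : α → ℝ} (hg : LipschitzWith 1 g) {ε r : ℝ}
    (hfin : hausdorffEDist {x | f x < ε} {x | g x < ε} ≠ ⊤)
    (hr : hausdorffDist {x | f x < ε} {x | g x < ε} < r) {x : α} (hx : f x < ε) :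
    g x < ε + r := by
  obtain ⟨y, hy, hxy⟩ := exists_dist_lt_of_hausdorffDist_lt (show x ∈ {x | f x < ε} from hx) hr hfin
  calc g x ≤ g y + dist x y := by simpa using hg.le_add_mul x y
    _ < ε + r := add_lt_add hy hxy

-- `hfin` is needed since `hausdorffDist` is `0` when `hausdorffEDist = ⊤`.
theorem tendsto_of_tendsto_hausdorffDist_sublevel {ι : Type*} {l : Filter ι}
    {f : α → ℝ} {fs : ι → α → ℝ} (hf : LipschitzWith 1 f) (hfs : ∀ i, LipschitzWith 1 (fs i))
    (hf_nonneg : ∀ x, 0 ≤ f x) (hfs_nonneg : ∀ i x, 0 ≤ fs i x)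
    (hfin : ∀ ε > 0, ∀ i, hausdorffEDist {x | fs i x < ε} {x | f x < ε} ≠ ⊤)
    (hH : ∀ ε > 0, Tendsto (fun i => hausdorffDist {x | fs i x < ε} {x | f x < ε}) l (𝓝 0))
    (x : α) : Tendsto (fun i => fs i x) l (𝓝 (f x)) := by
  refine tendsto_order.2 ⟨fun a ha => ?_, fun b hb => ?_⟩
  · rcases lt_or_ge a 0 with ha0 | ha0
    · exact Eventually.of_forall fun i => ha0.trans_le (hfs_nonneg i x)
    have hε : 0 < (a + f x) / 2 := by linarith
    filter_upwards [(hH _ hε).eventually_lt_const (half_pos (sub_pos.2 ha))] with i hi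
    by_contra! hia
    have := lt_add_of_hausdorffDist_sublevel_lt hf (hfin _ hε i) hi
      (show fs i x < (a + f x) / 2 by linarith)
    linarith
  · have hε : 0 < (f x + b) / 2 := by linarith [hf_nonneg x]
    filter_upwards [(hH _ hε).eventually_lt_const (half_pos (sub_pos.2 hb))] with i hi
    have := lt_add_of_hausdorffDist_sublevel_lt (hfs i)
      (by rw [hausdorffEDist_comm]; exact hfin _ hε i) (by rwa [hausdorffDist_comm])
      (show f x < (f x + b) / 2 by linarith)
    linarith

end Sublevel

open Filter Topology Metric in
/-- If all pseudospectra converge in Hausdorff distance, then the spectral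
quantities `fₙ(λ) = μ(Aₙ - λ)` converge pointwise to `f(λ) = μ(A - λ)`. -/
theorem pointwise_of_pseudospectra_hausdorff {X : Type*} [NormedAddCommGroup X]
    [NormedSpace ℂ X] [CompleteSpace X]
    (A : X →L[ℂ] X) (As : ℕ → X →L[ℂ] X)
    (hH : ∀ ε : ℝ, 0 < ε →
      Tendsto (fun n => hausdorffDist
          {lam : ℂ | mu (As n - lam • (1 : X →L[ℂ] X)) < ε}
          {lam : ℂ | mu (A - lam • (1 : X →L[ℂ] X)) < ε})
        atTop (𝓝 0)) :
    ∀ lam : ℂ, Tendsto (fun n => mu (As n - lam • (1 : X →L[ℂ] X)))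
      atTop (𝓝 (mu (A - lam • (1 : X →L[ℂ] X)))) := by
  intro lam
  rcases subsingleton_or_nontrivial X with hX | hX
  · simp only [Subsingleton.elim (As _ - lam • 1) (A - lam • 1)]
    exact tendsto_const_nhds
  exact tendsto_of_tendsto_hausdorffDist_sublevel (lipschitzWith_mu_sub_smul_one A)
    (fun n => lipschitzWith_mu_sub_smul_one (As n)) (fun _ => mu_nonneg _)
    (fun _ _ => mu_nonneg _) (fun _ hε n => hausdorffEDist_pseudospectrum_ne_top (As n) A hε)
    hH lam
end
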